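/- arXiv:1210.2001 — 2 statements merged into one kernel-verified Lean document; each statement's English description precedes it below -/
import Mathlib

section
/- Every squarefull positive integer m can be written uniquely in the form m = d · rad(d) for some positive integer d; that is, the map d ↦ d · rad(d) is a bijection from the positive integers onto the set of squarefull positive integers. -/
open Finset

/-- The radical of a natural number: the product of its distinct prime divisors. -/
def rad (n : ℕ) : ℕ := ∏ p ∈ n.primeFactors, p

/-- A positive integer is squarefull if every prime dividing it does so at least to the
second power. -/
def Squarefull (m : ℕ) : Prop := ∀ p : ℕ, p.Prime → p ∣ m → p ^ 2 ∣ m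

/-!
`d * rad d` has the same prime factors as `d`, each to a strictly larger power, so it is
squarefull and recovers `rad d` as its radical; hence `d ↦ d * rad d` is injective. Conversely,
a squarefull `m` is divisible by `rad m ^ 2`, so `d := m / rad m` is still divisible by `rad m`
and has the same prime factors as `m`, whence `d * rad d = d * rad m = m`.
-/

lemma rad_pos (n : ℕ) : 0 < rad n :=
  prod_pos fun _ hp => (Nat.prime_of_mem_primeFactors hp).pos

lemma rad_dvd (n : ℕ) : rad n ∣ n := Nat.prod_primeFactors_dvd n

lemma primeFactors_rad (n : ℕ) : (rad n).primeFactors = n.primeFactors :=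
  Nat.primeFactors_prod fun _ hp => Nat.prime_of_mem_primeFactors hp

lemma rad_eq_rad_of_primeFactors_eq {a b : ℕ} (h : a.primeFactors = b.primeFactors) :
    rad a = rad b := by
  rw [rad, rad, h]

lemma Nat.Prime.dvd_rad_iff {p n : ℕ} (hp : p.Prime) (hn : n ≠ 0) : p ∣ rad n ↔ p ∣ n := by
  have dvd_iff_mem {k : ℕ} (hk : k ≠ 0) : p ∣ k ↔ p ∈ k.primeFactors := by
    simp [Nat.mem_primeFactors_of_ne_zero hk, hp]
  rw [dvd_iff_mem (rad_pos n).ne', primeFactors_rad, dvd_iff_mem hn]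

lemma primeFactors_mul_rad {d : ℕ} (hd : d ≠ 0) : (d * rad d).primeFactors = d.primeFactors := by
  rw [Nat.primeFactors_mul hd (rad_pos d).ne', primeFactors_rad, union_self]

lemma rad_mul_rad {d : ℕ} (hd : d ≠ 0) : rad (d * rad d) = rad d :=
  rad_eq_rad_of_primeFactors_eq (primeFactors_mul_rad hd)

lemma squarefull_mul_rad (d : ℕ) : Squarefull (d * rad d) := by
  intro p hp hpd
  rcases eq_or_ne d 0 with rfl | hd
  · simp
  have hp_dvd_d : p ∣ d := (hp.dvd_mul.mp hpd).elim id fun h => h.trans (rad_dvd d)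
  exact (sq p).symm ▸ mul_dvd_mul hp_dvd_d ((hp.dvd_rad_iff hd).mpr hp_dvd_d)

lemma Squarefull.rad_sq_dvd {m : ℕ} (hm : Squarefull m) : rad m ^ 2 ∣ m := by
  rw [rad, ← prod_pow]
  refine prod_dvd_of_isRelPrime ?_ fun p hp => hm p (Nat.prime_of_mem_primeFactors hp)
    (Nat.dvd_of_mem_primeFactors hp)
  intro p hp q hq hpq
  exact Nat.coprime_iff_isRelPrime.mp <| ((Nat.coprime_primes (Nat.prime_of_mem_primeFactors hp)
    (Nat.prime_of_mem_primeFactors hq)).mpr hpq).pow 2 2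

lemma Squarefull.div_rad_mul_rad {m : ℕ} (hm : Squarefull m) (hm0 : m ≠ 0) :
    m / rad m * rad (m / rad m) = m := by
  have hrad_dvd : rad m ∣ m / rad m := Nat.dvd_div_of_mul_dvd ((sq (rad m)) ▸ hm.rad_sq_dvd)
  have hd : m / rad m ≠ 0 := Nat.div_ne_zero_iff_of_dvd (rad_dvd m) |>.mpr ⟨hm0, (rad_pos m).ne'⟩
  have hfactors : (m / rad m).primeFactors = m.primeFactors :=
    subset_antisymm (Nat.primeFactors_mono (Nat.div_dvd_of_dvd (rad_dvd m)) hm0)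
      (primeFactors_rad m ▸ Nat.primeFactors_mono hrad_dvd hd)
  rw [rad_eq_rad_of_primeFactors_eq hfactors, Nat.div_mul_cancel (rad_dvd m)]

theorem squarefull_eq_d_mul_rad_d_bijection :
    Set.BijOn (fun d : ℕ => d * rad d)
      {d : ℕ | 0 < d}
      {m : ℕ | 0 < m ∧ Squarefull m} := by
  refine ⟨fun d (hd : 0 < d) => ⟨Nat.mul_pos hd (rad_pos d), squarefull_mul_rad d⟩, ?_, ?_⟩
  · intro d (hd : 0 < d) e (he : 0 < e) (h : d * rad d = e * rad e)
    have hrad : rad d = rad e := by rw [← rad_mul_rad hd.ne', h, rad_mul_rad he.ne']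
    exact Nat.eq_of_mul_eq_mul_right (rad_pos e) (hrad ▸ h)
  · rintro m ⟨hm, hsq⟩
    exact ⟨m / rad m, Nat.div_pos (Nat.le_of_dvd hm (rad_dvd m)) (rad_pos m),
      hsq.div_rad_mul_rad hm.ne'⟩
end

section
/- There is an absolute constant C such that for all integers d ≥ 2 and all real x ≥ 1, the number K_d(x) of composite integers n ≤ x having exactly d distinct prime factors and satisfying rad(φ(n)) ∣ n − 1 is at most C · x^{1 - 1/(2d)}; the constant C does not depend on d. -/
open Finset

/-!
A composite `n` with `rad φ(n) ∣ n - 1` is squarefree. Write `n = p m` with `p` its largest prime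
factor and `p - 1 = s k²` with `s` squarefree. As `p - 1 ∣ φ(n)` and `n - 1 ≡ m - 1 (mod p - 1)`,
`s ∣ rad (p - 1) ∣ m - 1`, say `m - 1 = j s`. So `n = (j s + 1)(s k² + 1)` is determined by
`(s, j, k)`, where `j s² k² ≤ n` and, since `m ≤ p ^ (d - 1)`, `(j s) ^ d ≤ n ^ (d - 1)`.
For fixed `s, j` there are at most `√(x / (j s²))` values of `k`; summing over
`j ≤ x ^ (1 - 1/d) / s` gives `≤ 2 √x √(x ^ (1 - 1/d)) s ^ (-3/2)`, and `∑ s ^ (-3/2) ≤ 3`.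
-/

lemma rad_dvd_rad {a b : ℕ} (h : a ∣ b) (hb : b ≠ 0) : rad a ∣ rad b :=
  prod_dvd_prod_of_subset _ _ _ (Nat.primeFactors_mono h hb)

lemma Squarefree.dvd_rad {s t : ℕ} (hs : Squarefree s) (h : s ∣ t) (ht : t ≠ 0) : s ∣ rad t := by
  rw [← Nat.prod_primeFactors_of_squarefree hs]
  exact prod_dvd_prod_of_subset _ _ _ (Nat.primeFactors_mono h ht)

lemma Nat.squarefree_of_rad_totient_dvd_sub_one {n : ℕ} (hn : n ≠ 0)
    (h : rad n.totient ∣ n - 1) : Squarefree n := by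
  refine Nat.squarefree_iff_prime_squarefree.2 fun q hq ⟨c, hc⟩ => ?_
  have hq_totient : q ∣ n.totient := by
    rw [hc, mul_assoc, Nat.totient_mul_of_prime_of_dvd hq (dvd_mul_right q c)]
    exact dvd_mul_right _ _
  have hq_rad : q ∣ rad n.totient :=
    dvd_prod_of_mem _ (Nat.mem_primeFactors.2 ⟨hq, hq_totient, (Nat.totient_pos.2 (by omega)).ne'⟩)
  have hq_n : q ∣ n := ⟨q * c, by rw [hc, mul_assoc]⟩
  have hcop : n.Coprime (n - 1) :=
    (Nat.coprime_self_sub_right (by omega)).2 (Nat.coprime_one_right n)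
  exact hq.one_lt.ne' ((hcop.coprime_dvd_left hq_n).eq_one_of_dvd (hq_rad.trans h))

lemma Nat.le_pow_card_primeFactors_of_squarefree {m p : ℕ} (hm : Squarefree m)
    (hp : ∀ q ∈ m.primeFactors, q ≤ p) : m ≤ p ^ m.primeFactors.card := by
  calc m = ∏ q ∈ m.primeFactors, q := (Nat.prod_primeFactors_of_squarefree hm).symm
    _ ≤ p ^ m.primeFactors.card := prod_le_pow_card _ _ _ hp

lemma Nat.exists_prime_mul_pow_card_primeFactors_le {n : ℕ} (hn : 1 < n) (hnp : ¬ n.Prime)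
    (hsq : Squarefree n) :
    ∃ p m, p.Prime ∧ p * m = n ∧ 2 ≤ m ∧
      m ^ n.primeFactors.card ≤ n ^ (n.primeFactors.card - 1) := by
  have hne : n.primeFactors.Nonempty := Nat.nonempty_primeFactors.2 hn
  obtain ⟨hp, ⟨m, hm⟩, -⟩ := Nat.mem_primeFactors.1 (n.primeFactors.max'_mem hne)
  set p := n.primeFactors.max' hne
  have hm0 : m ≠ 0 := by rintro rfl; omega
  have hm1 : m ≠ 1 := by rintro rfl; exact hnp (by rwa [hm, mul_one])
  have hpm : ¬ p ∣ m := fun ⟨c, hc⟩ =>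
    Nat.squarefree_iff_prime_squarefree.1 hsq p hp ⟨c, by rw [hm, hc, mul_assoc]⟩
  have hcard : n.primeFactors.card = m.primeFactors.card + 1 := by
    rw [hm, Nat.primeFactors_mul hp.ne_zero hm0, hp.primeFactors, singleton_union,
      card_insert_of_notMem fun h => hpm (Nat.dvd_of_mem_primeFactors h)]
  have hmp : m ≤ p ^ m.primeFactors.card :=
    Nat.le_pow_card_primeFactors_of_squarefree (hsq.squarefree_of_dvd ⟨p, by rw [hm, mul_comm]⟩)
      fun q hq => le_max' _ q (Nat.primeFactors_mono ⟨p, by rw [hm, mul_comm]⟩ (by omega) hq)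
  refine ⟨p, m, hp, hm.symm, by omega, ?_⟩
  rw [hcard, Nat.add_sub_cancel, pow_succ, hm, mul_pow, mul_comm (p ^ _)]
  exact Nat.mul_le_mul_left _ hmp

lemma rad_sub_one_dvd_sub_one_of_rad_totient_dvd {p m : ℕ} (hp : p.Prime) (hm : m ≠ 0)
    (h : rad (p * m).totient ∣ p * m - 1) : rad (p - 1) ∣ m - 1 := by
  have htot : p - 1 ∣ (p * m).totient := by
    simpa [Nat.totient_prime hp] using Nat.totient_dvd_of_dvd (dvd_mul_right p m)
  have hsplit : p * m - 1 = (p - 1) * m + (m - 1) := by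
    have : m ≤ p * m := Nat.le_mul_of_pos_left m hp.pos
    rw [Nat.sub_one_mul]; omega
  have htot_ne : (p * m).totient ≠ 0 := (Nat.totient_pos.2 (Nat.mul_pos hp.pos (by omega))).ne'
  have h' := (rad_dvd_rad htot htot_ne).trans h
  rw [hsplit] at h'
  exact (Nat.dvd_add_right (dvd_mul_of_dvd_left (Nat.prod_primeFactors_dvd _) m)).1 h'

theorem Nat.exists_factorization_of_rad_totient_dvd_sub_one {n : ℕ} (hn : 1 < n)
    (hnp : ¬ n.Prime) (h : rad n.totient ∣ n - 1) :
    ∃ s j k, 0 < s ∧ 0 < j ∧ 0 < k ∧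
      (j * s) ^ n.primeFactors.card ≤ n ^ (n.primeFactors.card - 1) ∧
      j * s ^ 2 * k ^ 2 ≤ n ∧ (j * s + 1) * (s * k ^ 2 + 1) = n := by
  obtain ⟨p, m, hp, rfl, hm, hmn⟩ := Nat.exists_prime_mul_pow_card_primeFactors_le hn hnp
    (Nat.squarefree_of_rad_totient_dvd_sub_one (by omega) h)
  obtain ⟨s, k, hs, hk, hsk, hsq⟩ := Nat.sq_mul_squarefree_of_pos (Nat.sub_pos_of_lt hp.one_lt)
  obtain ⟨j, hj⟩ : s ∣ m - 1 := (hsq.dvd_rad ⟨k ^ 2, by rw [← hsk, mul_comm]⟩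
    (Nat.sub_pos_of_lt hp.one_lt).ne').trans
    (rad_sub_one_dvd_sub_one_of_rad_totient_dvd hp (by omega) h)
  have hj0 : 0 < j := Nat.pos_of_ne_zero (by rintro rfl; rw [mul_zero] at hj; omega)
  refine ⟨s, j, k, hs, hj0, hk, ?_, ?_, ?_⟩
  · calc (j * s) ^ _ = (m - 1) ^ _ := by rw [hj, mul_comm]
      _ ≤ m ^ _ := Nat.pow_le_pow_left (Nat.sub_le m 1) _
      _ ≤ _ := hmn
  · calc j * s ^ 2 * k ^ 2 = (p - 1) * (m - 1) := by rw [← hsk, hj]; ring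
      _ ≤ p * m := Nat.mul_le_mul (Nat.sub_le p 1) (Nat.sub_le m 1)
  · have hm' : j * s + 1 = m := by rw [mul_comm, ← hj]; omega
    have hp' : s * k ^ 2 + 1 = p := by rw [mul_comm, hsk]; have := hp.one_lt; omega
    rw [hm', hp', mul_comm]

lemma card_filter_product_le_sum {α β : Type*} {A : Finset α} {B : Finset β} {P : α × β → Prop}
    [DecidablePred P] {g : α → ℝ} (h : ∀ a ∈ A, (#{b ∈ B | P (a, b)} : ℝ) ≤ g a) :
    (#{q ∈ A ×ˢ B | P q} : ℝ) ≤ ∑ a ∈ A, g a := by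
  have hsplit : #{q ∈ A ×ˢ B | P q} = ∑ a ∈ A, #{b ∈ B | P (a, b)} := by
    simp only [card_filter, sum_product]
  rw [hsplit]
  push_cast
  exact sum_le_sum h

lemma filter_Icc_cast_le_subset (N : ℕ) (r : ℝ) :
    ({k ∈ Icc 1 N | (k : ℝ) ≤ r} : Finset ℕ) ⊆ Icc 1 ⌊r⌋₊ := fun k hk => by
  simp only [mem_filter, mem_Icc] at hk ⊢
  exact ⟨hk.1.1, Nat.le_floor hk.2⟩

lemma card_filter_Icc_cast_le (N : ℕ) {r : ℝ} (hr : 0 ≤ r) :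
    (#({k ∈ Icc 1 N | (k : ℝ) ≤ r} : Finset ℕ) : ℝ) ≤ r := by
  calc (#({k ∈ Icc 1 N | (k : ℝ) ≤ r} : Finset ℕ) : ℝ) ≤ (#(Icc 1 ⌊r⌋₊) : ℕ) := by
        exact_mod_cast card_le_card (filter_Icc_cast_le_subset N r)
    _ ≤ r := by simpa using Nat.floor_le hr

lemma sum_Icc_inv_sqrt_le (n : ℕ) : ∑ j ∈ Icc 1 n, 1 / √(j : ℝ) ≤ 2 * √(n : ℝ) := by
  induction n with
  | zero => simp
  | succ n ih =>
    rw [sum_Icc_succ_top (by omega)]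
    have hb : 0 < √((n : ℝ) + 1) := Real.sqrt_pos.2 (by positivity)
    have hb2 : √((n : ℝ) + 1) ^ 2 = n + 1 := Real.sq_sqrt (by positivity)
    have ha2 : √(n : ℝ) ^ 2 = n := Real.sq_sqrt (by positivity)
    have key : 1 / √((n : ℝ) + 1) ≤ 2 * √((n : ℝ) + 1) - 2 * √(n : ℝ) := by
      rw [div_le_iff₀ hb]
      nlinarith [sq_nonneg (√((n : ℝ) + 1) - √(n : ℝ))]
    push_cast
    linarith

lemma sum_Icc_inv_mul_sqrt_add_le (n : ℕ) (hn : 1 ≤ n) :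
    ∑ s ∈ Icc 1 n, 1 / ((s : ℝ) * √(s : ℝ)) + 2 / √(n : ℝ) ≤ 3 := by
  induction n, hn using Nat.le_induction with
  | base => norm_num
  | succ n hn ih =>
    rw [sum_Icc_succ_top (by omega)]
    have ha : 0 < √(n : ℝ) := Real.sqrt_pos.2 (by positivity)
    have hb : 0 < √((n : ℝ) + 1) := Real.sqrt_pos.2 (by positivity)
    have ha2 : √(n : ℝ) ^ 2 = n := Real.sq_sqrt (by positivity)
    have hb2 : √((n : ℝ) + 1) ^ 2 = n + 1 := Real.sq_sqrt (by positivity)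
    have hab : √(n : ℝ) ≤ √((n : ℝ) + 1) := Real.sqrt_le_sqrt (by linarith)
    have key : 1 / (((n : ℝ) + 1) * √((n : ℝ) + 1)) ≤ 2 / √(n : ℝ) - 2 / √((n : ℝ) + 1) := by
      rw [div_sub_div _ _ ha.ne' hb.ne', div_le_div_iff₀ (by positivity) (by positivity)]
      nlinarith [mul_pos ha hb, mul_le_mul_of_nonneg_right hab hb.le, mul_pos (mul_pos ha hb) hb]
    push_cast at ih ⊢
    linarith

lemma sum_Icc_inv_mul_sqrt_le (n : ℕ) : ∑ s ∈ Icc 1 n, 1 / ((s : ℝ) * √(s : ℝ)) ≤ 3 := by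
  rcases Nat.eq_zero_or_pos n with rfl | hn
  · simp
  · linarith [sum_Icc_inv_mul_sqrt_add_le n hn, show 0 ≤ 2 / √(n : ℝ) by positivity]

lemma sum_filter_Icc_inv_sqrt_le (N : ℕ) {r : ℝ} (hr : 0 ≤ r) :
    ∑ j ∈ ({j ∈ Icc 1 N | (j : ℝ) ≤ r} : Finset ℕ), 1 / √(j : ℝ) ≤ 2 * √r :=
  calc ∑ j ∈ ({j ∈ Icc 1 N | (j : ℝ) ≤ r} : Finset ℕ), 1 / √(j : ℝ)
      ≤ ∑ j ∈ Icc 1 ⌊r⌋₊, 1 / √(j : ℝ) :=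
        sum_le_sum_of_subset_of_nonneg (filter_Icc_cast_le_subset N r) fun _ _ _ => by positivity
    _ ≤ 2 * √(⌊r⌋₊ : ℝ) := sum_Icc_inv_sqrt_le _
    _ ≤ 2 * √r := by gcongr; exact Nat.floor_le hr

lemma Nat.cast_le_rpow_of_pow_le_pow_sub_one {a b d : ℕ} (hd : d ≠ 0) (h : a ^ d ≤ b ^ (d - 1)) :
    (a : ℝ) ≤ (b : ℝ) ^ (1 - 1 / d : ℝ) := by
  have hexp : (1 - 1 / d : ℝ) * d = (d - 1 : ℕ) := by
    rw [Nat.cast_sub (by omega)]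
    field_simp
    norm_num
  refine le_of_pow_le_pow_left₀ hd (by positivity) ?_
  rw [← Real.rpow_natCast (_ ^ _), ← Real.rpow_mul (by positivity), hexp, Real.rpow_natCast]
  exact_mod_cast h

lemma sqrt_mul_sqrt_rpow_one_sub_inv (x : ℝ) (hx : 0 ≤ x) {d : ℝ} (hd : 1 ≤ d) :
    √x * √(x ^ (1 - 1 / d)) = x ^ (1 - 1 / (2 * d)) := by
  have hsum : 1 / 2 + (1 - 1 / d) * (1 / 2) = 1 - 1 / (2 * d) := by field_simp; ring
  have hne : 1 - 1 / (2 * d) ≠ 0 := by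
    have : 1 / (2 * d) < 1 := by rw [div_lt_one (by positivity)]; linarith
    linarith
  rw [Real.sqrt_eq_rpow, Real.sqrt_eq_rpow, ← Real.rpow_mul hx, ← Real.rpow_add' hx (hsum ▸ hne),
    hsum]

/-- `(s, j, k)` stands for `n = (j s + 1)(s k² + 1)`, where `p = s k² + 1` is the largest prime
factor of `n` with `s` squarefree, and `n / p - 1 = j s`. -/
def factorTriples (N d : ℕ) : Finset (ℕ × ℕ × ℕ) :=
  {q ∈ Icc 1 N ×ˢ Icc 1 N ×ˢ Icc 1 N |
    (q.2.1 * q.1) ^ d ≤ N ^ (d - 1) ∧ q.2.1 * q.1 ^ 2 * q.2.2 ^ 2 ≤ N}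

lemma filter_subset_image_factorTriples (N d : ℕ) :
    {n ∈ Icc 1 N | 1 < n ∧ ¬ n.Prime ∧ n.primeFactors.card = d ∧ rad n.totient ∣ n - 1} ⊆
      (factorTriples N d).image fun q => (q.2.1 * q.1 + 1) * (q.1 * q.2.2 ^ 2 + 1) := by
  intro n hn
  obtain ⟨⟨-, hnN⟩, hn1, hnp, rfl, h⟩ := by simpa only [mem_filter, mem_Icc] using hn
  obtain ⟨s, j, k, hs, hj, hk, hjs, hjsk, rfl⟩ :=
    Nat.exists_factorization_of_rad_totient_dvd_sub_one hn1 hnp h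
  have hN : j * s ^ 2 * k ^ 2 ≤ N := hjsk.trans hnN
  have hpos : 0 < j * s ^ 2 * k ^ 2 := by positivity
  refine mem_image.2 ⟨(s, j, k), mem_filter.2 ⟨?_, hjs.trans (Nat.pow_le_pow_left hnN _), hN⟩, rfl⟩
  simp only [mem_product, mem_Icc]
  refine ⟨⟨hs, ?_⟩, ⟨hj, ?_⟩, ⟨hk, ?_⟩⟩ <;>
    refine le_trans (Nat.le_of_dvd hpos ?_) hN
  · exact ⟨j * s * k ^ 2, by ring⟩
  · exact ⟨s ^ 2 * k ^ 2, by ring⟩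
  · exact ⟨j * s ^ 2 * k, by ring⟩

lemma card_filter_factorTriples_fiber_le {N d s j : ℕ} (hd : d ≠ 0) (hs : 0 < s) (hj : 0 < j) :
    (#({k ∈ Icc 1 N | (j * s) ^ d ≤ N ^ (d - 1) ∧ j * s ^ 2 * k ^ 2 ≤ N} : Finset ℕ) : ℝ) ≤
      if (j : ℝ) ≤ (N : ℝ) ^ (1 - 1 / d : ℝ) / s then √(N : ℝ) / (s * √(j : ℝ)) else 0 := by
  split_ifs with hjE
  · refine le_trans ?_ (card_filter_Icc_cast_le N (by positivity))
    gcongr with k hk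
    rintro ⟨-, hk⟩
    rw [le_div_iff₀ (by positivity)]
    refine Real.le_sqrt_of_sq_le ?_
    rw [mul_pow, mul_pow, Real.sq_sqrt (by positivity)]
    exact_mod_cast (by linarith [hk] : k ^ 2 * (s ^ 2 * j) ≤ N)
  · rw [card_eq_zero.2 (filter_eq_empty_iff.2 ?_), Nat.cast_zero]
    rintro k - ⟨hjs, -⟩
    refine hjE ((le_div_iff₀ (by positivity)).2 ?_)
    exact_mod_cast Nat.cast_le_rpow_of_pow_le_pow_sub_one hd hjs

lemma card_factorTriples_le {N d : ℕ} (hd : d ≠ 0) :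
    (#(factorTriples N d) : ℝ) ≤ 6 * (N : ℝ) ^ (1 - 1 / (2 * d) : ℝ) := by
  set E : ℝ := (N : ℝ) ^ (1 - 1 / d : ℝ)
  have hE : 0 ≤ E := by positivity
  have hfiber : ∀ s ∈ Icc 1 N,
      (#({jk ∈ Icc 1 N ×ˢ Icc 1 N | (jk.1 * s) ^ d ≤ N ^ (d - 1) ∧
        jk.1 * s ^ 2 * jk.2 ^ 2 ≤ N} : Finset (ℕ × ℕ)) : ℝ) ≤ √(N : ℝ) / s * (2 * √(E / s)) := by
    intro s hs
    have hs : 0 < s := (mem_Icc.1 hs).1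
    calc _ ≤ ∑ j ∈ Icc 1 N, if (j : ℝ) ≤ E / s then √(N : ℝ) / (s * √(j : ℝ)) else 0 :=
          card_filter_product_le_sum fun j hj => by
            exact card_filter_factorTriples_fiber_le hd hs (mem_Icc.1 hj).1
      _ = √(N : ℝ) / s * ∑ j ∈ ({j ∈ Icc 1 N | (j : ℝ) ≤ E / s} : Finset ℕ), 1 / √(j : ℝ) := by
          rw [← sum_filter, mul_sum]
          exact sum_congr rfl fun j _ => by rw [mul_one_div, div_div]
      _ ≤ √(N : ℝ) / s * (2 * √(E / s)) := by
          gcongr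
          exact sum_filter_Icc_inv_sqrt_le N (by positivity)
  calc (#(factorTriples N d) : ℝ) ≤ ∑ s ∈ Icc 1 N, √(N : ℝ) / s * (2 * √(E / s)) :=
        card_filter_product_le_sum hfiber
    _ = 2 * (√(N : ℝ) * √E) * ∑ s ∈ Icc 1 N, 1 / ((s : ℝ) * √(s : ℝ)) := by
        rw [mul_sum]
        refine sum_congr rfl fun s _ => ?_
        rw [Real.sqrt_div' _ (Nat.cast_nonneg s)]
        field_simp
    _ ≤ 2 * (√(N : ℝ) * √E) * 3 := by gcongr; exact sum_Icc_inv_mul_sqrt_le N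
    _ = 6 * (N : ℝ) ^ (1 - 1 / (2 * d) : ℝ) := by
        have hd1 : (1 : ℝ) ≤ d := by exact_mod_cast Nat.one_le_iff_ne_zero.2 hd
        rw [sqrt_mul_sqrt_rpow_one_sub_inv _ (Nat.cast_nonneg N) hd1]
        ring

theorem K_d_upper_bound :
    ∃ C : ℝ, ∀ d : ℕ, 2 ≤ d → ∀ x : ℝ, 1 ≤ x →
      ((((Finset.Icc 1 ⌊x⌋₊).filter
        (fun n => 1 < n ∧ ¬ n.Prime ∧ n.primeFactors.card = d ∧
          rad n.totient ∣ n - 1)).card : ℝ))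
        ≤ C * x ^ ((1 : ℝ) - 1 / (2 * (d : ℝ))) := by
  refine ⟨6, fun d hd x hx => ?_⟩
  have hexp : 0 ≤ (1 : ℝ) - 1 / (2 * d) := by
    have : (2 : ℝ) ≤ d := by exact_mod_cast hd
    rw [sub_nonneg, div_le_one (by positivity)]
    linarith
  calc _ ≤ (#(factorTriples ⌊x⌋₊ d) : ℝ) := by
        exact_mod_cast (card_le_card (filter_subset_image_factorTriples _ d)).trans card_image_le
    _ ≤ 6 * (⌊x⌋₊ : ℝ) ^ (1 - 1 / (2 * d) : ℝ) := card_factorTriples_le (by omega)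
    _ ≤ 6 * x ^ ((1 : ℝ) - 1 / (2 * (d : ℝ))) := by
        gcongr
        exact Nat.floor_le (by linarith)
end
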